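/- Termination of R_B: there is no infinite sequence of DeMorgan formulas t_0 →_{R_B} t_1 →_{R_B} t_2 →_{R_B} ⋯; equivalently, the converse of the one-step rewrite relation →_{R_B} is well-founded. -/
import Mathlib


/-- DeMorgan formulas: variables, constants 0 and 1, negation, conjunction, disjunction. -/
inductive Fm : Type
  | var : ℕ → Fm
  | zero : Fm
  | one : Fm
  | not : Fm → Fm
  | and : Fm → Fm → Fm
  | or : Fm → Fm → Fm
deriving DecidableEq

/-- Evaluation of a DeMorgan formula under an assignment. -/
def Fm.eval (σ : ℕ → Bool) : Fm → Bool
  | .var n => σ n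
  | .zero => false
  | .one => true
  | .not t => !(t.eval σ)
  | .and t u => t.eval σ && u.eval σ
  | .or t u => t.eval σ || u.eval σ

/-- The root rewrite rules of the term rewriting system `R_B`
(the rule variable `g` stands for an arbitrary formula). -/
inductive RB : Fm → Fm → Prop
  | zero_def : RB .zero (.not .one)
  | not_not (g : Fm) : RB (.not (.not g)) g
  | and_idem (g : Fm) : RB (.and g g) g
  | or_idem (g : Fm) : RB (.or g g) g
  | and_notone_r (g : Fm) : RB (.and g (.not .one)) (.not .one)
  | and_notone_l (g : Fm) : RB (.and (.not .one) g) (.not .one)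
  | or_one_r (g : Fm) : RB (.or g .one) .one
  | or_one_l (g : Fm) : RB (.or .one g) .one
  | and_one_r (g : Fm) : RB (.and g .one) g
  | and_one_l (g : Fm) : RB (.and .one g) g
  | or_notone_r (g : Fm) : RB (.or g (.not .one)) g
  | or_notone_l (g : Fm) : RB (.or (.not .one) g) g
  | and_not_self_r (g : Fm) : RB (.and g (.not g)) (.not .one)
  | and_not_self_l (g : Fm) : RB (.and (.not g) g) (.not .one)
  | or_not_self_r (g : Fm) : RB (.or g (.not g)) .one
  | or_not_self_l (g : Fm) : RB (.or (.not g) g) .one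

/-- One rewrite step of `R_B`: a rule applied to a single subterm. -/
inductive Step : Fm → Fm → Prop
  | rule {t u : Fm} : RB t u → Step t u
  | not {t u : Fm} : Step t u → Step (.not t) (.not u)
  | and_left {t t' u : Fm} : Step t t' → Step (.and t u) (.and t' u)
  | and_right {t u u' : Fm} : Step u u' → Step (.and t u) (.and t u')
  | or_left {t t' u : Fm} : Step t t' → Step (.or t u) (.or t' u)
  | or_right {t u u' : Fm} : Step u u' → Step (.or t u) (.or t u')

/-- The reflexive transitive closure of one-step rewriting. -/
def Steps : Fm → Fm → Prop := Relation.ReflTransGen Step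

/-- A formula is in normal form when no rule applies to any of its subterms. -/
def NormalForm (t : Fm) : Prop := ¬ ∃ u, Step t u

def Fm.wt : Fm → ℕ
  | .var _ => 1
  | .zero => 3
  | .one => 1
  | .not t => t.wt + 1
  | .and t u => t.wt + u.wt + 1
  | .or t u => t.wt + u.wt + 1

theorem Fm.wt_pos (t : Fm) : 1 ≤ t.wt := by
  cases t <;> simp [Fm.wt]

theorem RB_wt_lt : ∀ {t u : Fm}, RB t u → u.wt < t.wt := by
  intro t u h
  cases h <;> simp [Fm.wt] <;>
    first
    | omega
    | (rename_i g; have := g.wt_pos; omega)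

theorem Step_wt_lt : ∀ {t u : Fm}, Step t u → u.wt < t.wt := by
  intro t u h
  induction h with
  | rule h => exact RB_wt_lt h
  | not _ ih => simpa [Fm.wt] using ih
  | and_left _ ih => simp [Fm.wt]; omega
  | and_right _ ih => simp [Fm.wt]; omega
  | or_left _ ih => simp [Fm.wt]; omega
  | or_right _ ih => simp [Fm.wt]; omega

/-- Termination of `R_B`: the converse of the one-step rewrite relation is
well-founded, i.e. there is no infinite rewrite sequence `t₀ → t₁ → t₂ → ⋯`. -/
theorem RB_terminating : WellFounded (fun u t : Fm => Step t u) := by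
  have : Subrelation (fun u t : Fm => Step t u) (InvImage (· < ·) Fm.wt) := by
    intro u t h
    exact Step_wt_lt h
  exact this.wf (InvImage.wf _ Nat.lt_wfRel.wf)
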